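/- arXiv:1906.05072 — 6 statements merged into one kernel-verified Lean document; each statement's English description precedes it below -/
import Mathlib

section
/- Let R → A be a flat morphism of noetherian commutative rings of characteristic p with geometrically reduced fibres. Then the relative Frobenius morphism Frob_{A/R} : A ⊗_{R, Frob} R → A, sending a ⊗ r to a^p · r, is injective. -/
open TensorProduct

set_option maxHeartbeats 1000000
set_option synthInstance.maxHeartbeats 400000

universe u

/-- `Tw p i R` is `R`, viewed as an `R`-algebra via the `i`-th iterate of the
absolute Frobenius `x ↦ x^p`. -/
def Tw (p i : ℕ) (R : Type u) : Type u := R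

variable (p i : ℕ) (R : Type u)

instance [CommRing R] : CommRing (Tw p i R) := inferInstanceAs (CommRing R)

/-- The identity of `R`, as a ring isomorphism `R ≃+* Tw p i R`. -/
def twCast [CommRing R] : R ≃+* Tw p i R := RingEquiv.refl R

noncomputable instance [CommRing R] [Fact p.Prime] [CharP R p] : Algebra R (Tw p i R) :=
  ((twCast p i R).toRingHom.comp (iterateFrobenius R p i)).toAlgebra

lemma tw_algebraMap_apply [CommRing R] [Fact p.Prime] [CharP R p] (r : R) :
    algebraMap R (Tw p i R) r = twCast p i R (r ^ p ^ i) := rfl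

lemma tw_smul_def [CommRing R] [Fact p.Prime] [CharP R p] (r : R) (x : Tw p i R) :
    r • x = twCast p i R (r ^ p ^ i) * x := Algebra.smul_def r x

variable (A : Type u)

/-- The `i`-th Frobenius twist `A^{p^i/R} = A ⊗_{R, Frob^i} R` of an `R`-algebra `A`,
viewed as an `R`-algebra via the right-hand tensor factor. -/
def FTw [CommRing R] [CommRing A] [Algebra R A] [Fact p.Prime] [CharP R p] : Type u :=
  A ⊗[R] (Tw p i R)

section
variable [CommRing R] [CommRing A] [Algebra R A] [Fact p.Prime] [CharP R p]

noncomputable instance : CommRing (FTw p i R A) :=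
  inferInstanceAs (CommRing (A ⊗[R] Tw p i R))

noncomputable instance : Algebra R (FTw p i R A) :=
  ((Algebra.TensorProduct.includeRight (R := R) (A := A) (B := Tw p i R)).toRingHom.comp
    (twCast p i R).toRingHom).toAlgebra

lemma ftw_algebraMap_apply (r : R) :
    algebraMap R (FTw p i R A) r = (1 : A) ⊗ₜ[R] (twCast p i R r) := rfl

end

section
variable [CommRing R] [CommRing A] [Algebra R A] [Fact p.Prime] [CharP R p] [CharP A p]

/-- The relative Frobenius `A^{p^{i+1}/R} → A^{p^i/R}`, `a ⊗ r ↦ a^p ⊗ r`,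
as an additive map. -/
noncomputable def transAddHom : (A ⊗[R] Tw p (i + 1) R) →+ (A ⊗[R] Tw p i R) :=
  TensorProduct.liftAddHom
    { toFun := fun a =>
        { toFun := fun v => (a ^ p) ⊗ₜ[R] (twCast p i R ((twCast p (i + 1) R).symm v))
          map_zero' := by simp
          map_add' := by intro v w; simp [TensorProduct.tmul_add] }
      map_zero' := by
        ext v
        simp [zero_pow (Nat.Prime.ne_zero Fact.out)]
      map_add' := by
        intro a b
        ext v
        simp [add_pow_char, TensorProduct.add_tmul] }
    (by
      intro r a v
      simp only [AddMonoidHom.coe_mk, ZeroHom.coe_mk]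
      rw [smul_pow, TensorProduct.smul_tmul]
      congr 1
      rw [tw_smul_def, tw_smul_def, map_mul, RingEquiv.symm_apply_apply, ← map_mul]
      congr 2
      rw [← pow_mul, ← pow_succ'])

@[simp] lemma transAddHom_tmul (a : A) (v : Tw p (i + 1) R) :
    transAddHom p i R A (a ⊗ₜ[R] v) =
      (a ^ p) ⊗ₜ[R] (twCast p i R ((twCast p (i + 1) R).symm v)) :=
  TensorProduct.liftAddHom_tmul _ _ _ _

/-- The relative Frobenius `A^{p^{i+1}/R} → A^{p^i/R}` as a ring homomorphism. -/
noncomputable def transRingHom : (A ⊗[R] Tw p (i + 1) R) →+* (A ⊗[R] Tw p i R) :=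
  { transAddHom p i R A with
    map_one' := by
      show transAddHom p i R A ((1 : A) ⊗ₜ[R] (1 : Tw p (i+1) R)) = (1 : A ⊗[R] Tw p i R)
      rw [transAddHom_tmul, one_pow]
      simp [Algebra.TensorProduct.one_def]
    map_mul' := by
      intro x y
      show transAddHom p i R A (x * y) = transAddHom p i R A x * transAddHom p i R A y
      induction x using TensorProduct.induction_on with
      | zero => simp
      | tmul a v =>
        induction y using TensorProduct.induction_on with
        | zero => simp
        | tmul b w =>
          rw [Algebra.TensorProduct.tmul_mul_tmul, transAddHom_tmul, transAddHom_tmul,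
            transAddHom_tmul, Algebra.TensorProduct.tmul_mul_tmul, mul_pow, map_mul, map_mul]
        | add y₁ y₂ h₁ h₂ => rw [mul_add, map_add, h₁, h₂, map_add, mul_add]
      | add x₁ x₂ h₁ h₂ => rw [add_mul, map_add, h₁, h₂, map_add, add_mul] }

/-- The relative Frobenius `A^{p^{i+1}/R} → A^{p^i/R}` as an `R`-algebra
homomorphism (for the `R`-algebra structures through the right-hand factors). -/
noncomputable def transAlgHom : FTw p (i + 1) R A →ₐ[R] FTw p i R A :=
  { transRingHom p i R A with
    commutes' := by
      intro r
      show transAddHom p i R A ((1 : A) ⊗ₜ[R] (twCast p (i+1) R r)) =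
        (1 : A) ⊗ₜ[R] (twCast p i R r)
      simp }

@[simp] lemma transAlgHom_apply (x : FTw p (i + 1) R A) :
    transAlgHom p i R A x = transAddHom p i R A x := rfl

/-- The preperfection `A^{p^∞/R} = lim_i A^{p^i/R}`, the inverse limit of the
Frobenius twists of `A` along the relative Frobenius maps, as an `R`-subalgebra
of the product `Π i, A^{p^i/R}`. -/
noncomputable def prePerfection : Subalgebra R (∀ i, FTw p i R A) where
  carrier := {x | ∀ i, transAlgHom p i R A (x (i + 1)) = x i}
  add_mem' := by
    intro x y hx hy i
    simp only [Pi.add_apply, map_add, hx i, hy i]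
  mul_mem' := by
    intro x y hx hy i
    simp only [Pi.mul_apply, map_mul, hx i, hy i]
  algebraMap_mem' := by
    intro r i
    show transAlgHom p i R A (algebraMap R (FTw p (i+1) R A) r) = _
    rw [AlgHom.commutes]
    rfl

variable (M : Type u) [AddCommGroup M] [Module R M]

/-- The inverse limit `lim_i (A^{p^i/R} ⊗_R M)` of the modules obtained by
tensoring the Frobenius twists of `A` with an `R`-module `M`, as a submodule
of the product. -/
noncomputable def limTensor : Submodule R (∀ i, (FTw p i R A) ⊗[R] M) where
  carrier := {x | ∀ i,
    LinearMap.rTensor M (transAlgHom p i R A).toLinearMap (x (i + 1)) = x i}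
  add_mem' := by
    intro x y hx hy i
    simp only [Pi.add_apply, map_add, hx i, hy i]
  zero_mem' := by
    intro i
    simp only [Pi.zero_apply, map_zero]
  smul_mem' := by
    intro r x hx i
    simp only [Pi.smul_apply, map_smul, hx i]

/-- The natural base change map `(lim_i A^{p^i/R}) ⊗_R M → lim_i (A^{p^i/R} ⊗_R M)`
(viewed as a map into the product `Π i, A^{p^i/R} ⊗_R M`; its image lies in the
inverse limit `limTensor`). -/
noncomputable def basechange :
    (↥(prePerfection p R A) ⊗[R] M) →ₗ[R] ∀ i, (FTw p i R A) ⊗[R] M :=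
  LinearMap.pi fun i =>
    TensorProduct.map ((LinearMap.proj i).comp (prePerfection p R A).val.toLinearMap)
      LinearMap.id

end

section RelFrobenius

variable (B : Type u) [CommRing R] [Fact p.Prime] [CharP R p]
  [CommRing B] [Algebra R B] [CharP B p]

/-- The relative Frobenius `B^{p/R} = B ⊗_{R, Frob} R → B`, `b ⊗ r ↦ b^p · r`,
as an additive map. -/
noncomputable def relFrobenius : (B ⊗[R] Tw p 1 R) →+ B :=
  TensorProduct.liftAddHom
    { toFun := fun b =>
        { toFun := fun v => algebraMap R B ((twCast p 1 R).symm v) * b ^ p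
          map_zero' := by simp
          map_add' := by intro v w; simp [add_mul]
        }
      map_zero' := by
        ext v
        simp [zero_pow (Nat.Prime.ne_zero Fact.out)]
      map_add' := by
        intro a b
        ext v
        simp [add_pow_char, mul_add] }
    (by
      intro r b v
      simp only [AddMonoidHom.coe_mk, ZeroHom.coe_mk]
      rw [smul_pow, tw_smul_def, map_mul, RingEquiv.symm_apply_apply, map_mul,
        Algebra.smul_def, map_pow, pow_one]
      rw [map_pow]
      ring)

@[simp] lemma relFrobenius_tmul (b : B) (v : Tw p 1 R) :
    relFrobenius p R B (b ⊗ₜ[R] v) = algebraMap R B ((twCast p 1 R).symm v) * b ^ p :=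
  TensorProduct.liftAddHom_tmul _ _ _ _

end RelFrobenius

/-!
For an `R`-module `M` let `M⁽ᵖ⁾` be `M` with `r` acting as `r ^ p`, and let
`φ_M : A ⊗_R M⁽ᵖ⁾ → A ⊗_R M`, `a ⊗ m ↦ a ^ p ⊗ m`; the relative Frobenius is `φ_R`.
As `A` is flat, injectivity of `φ_M` is inherited by extensions, so by the prime filtration of
a finite module over a noetherian ring it suffices to treat `M ≅ R ⧸ 𝔮`. Embed `R ⧸ 𝔮` into an
algebraically closed field `L` by `ι`; the `p`-th root `ρ` of `ι` is an injective `R`-linear map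
`M⁽ᵖ⁾ → L`, and `(A ⊗ ρ)(x) ^ p = (A ⊗ ι)(φ_M x)`. So `A ⊗ ρ`, injective by flatness, sends the
kernel of `φ_M` to nilpotents of the reduced ring `A ⊗_R L`.
-/

def FrobTwist (p : ℕ) (M : Type*) : Type _ := M

namespace FrobTwist

variable (p : ℕ) [Fact p.Prime] {R : Type*} [CommRing R] [CharP R p]
  {M N : Type*} [AddCommGroup M] [Module R M] [AddCommGroup N] [Module R N]

instance : AddCommGroup (FrobTwist p M) := inferInstanceAs (AddCommGroup M)

noncomputable instance : Module R (FrobTwist p M) := Module.compHom M (frobenius R p)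

def of : M ≃+ FrobTwist p M := AddEquiv.refl M

lemma smul_of (r : R) (m : M) : r • of p m = of p (r ^ p • m) := rfl

lemma of_symm_smul (r : R) (m : FrobTwist p M) :
    (of p).symm (r • m) = r ^ p • (of p).symm m := rfl

def map (g : M →ₗ[R] N) : FrobTwist p M →ₗ[R] FrobTwist p N where
  toFun m := of p (g ((of p).symm m))
  map_add' x y := by simp only [map_add]
  map_smul' r m := by simp only [of_symm_smul, map_smul, smul_of, RingHom.id_apply]

end FrobTwist

open FrobTwist

section TensorFrobenius

variable (p : ℕ) [Fact p.Prime] (R : Type*) [CommRing R] [CharP R p]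
  (A : Type*) [CommRing A] [Algebra R A] [CharP A p]

noncomputable def tensorFrobenius (M : Type*) [AddCommGroup M] [Module R M] :
    A ⊗[R] FrobTwist p M →+ A ⊗[R] M :=
  TensorProduct.liftAddHom
    { toFun a :=
        { toFun m := (a ^ p) ⊗ₜ[R] (of p).symm m
          map_zero' := by simp
          map_add' x y := by rw [map_add, TensorProduct.tmul_add] }
      map_zero' := by ext m; simp [zero_pow (Nat.Prime.ne_zero Fact.out)]
      map_add' a b := by ext m; simp [add_pow_char, TensorProduct.add_tmul] }
    (fun r a m => by simp [smul_pow, TensorProduct.smul_tmul, of_symm_smul])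

variable {R A}

@[simp] lemma tensorFrobenius_tmul {M : Type*} [AddCommGroup M] [Module R M]
    (a : A) (m : FrobTwist p M) :
    tensorFrobenius p R A M (a ⊗ₜ m) = (a ^ p) ⊗ₜ (of p).symm m :=
  TensorProduct.liftAddHom_tmul _ _ _ _

lemma lTensor_tensorFrobenius {M N : Type*} [AddCommGroup M] [Module R M] [AddCommGroup N]
    [Module R N] (g : M →ₗ[R] N) (x : A ⊗[R] FrobTwist p M) :
    g.lTensor A (tensorFrobenius p R A M x) =
      tensorFrobenius p R A N ((FrobTwist.map p g).lTensor A x) := by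
  induction x with
  | zero => simp
  | tmul a m => rfl
  | add x y hx hy => simp only [map_add, hx, hy]

theorem tensorFrobenius_injective_of_exact [Module.Flat R A]
    {M₁ M₂ M₃ : Type*} [AddCommGroup M₁] [Module R M₁] [AddCommGroup M₂] [Module R M₂]
    [AddCommGroup M₃] [Module R M₃] {f : M₁ →ₗ[R] M₂} {g : M₂ →ₗ[R] M₃}
    (hf : Function.Injective f) (hg : Function.Surjective g) (hfg : Function.Exact f g)
    (h₁ : Function.Injective (tensorFrobenius p R A M₁))
    (h₃ : Function.Injective (tensorFrobenius p R A M₃)) :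
    Function.Injective (tensorFrobenius p R A M₂) := by
  rw [injective_iff_map_eq_zero] at h₁ h₃ ⊢
  intro x hx
  have hgx : (FrobTwist.map p g).lTensor A x = 0 :=
    h₃ _ (by rw [← lTensor_tensorFrobenius, hx, map_zero])
  -- `FrobTwist.map p f` and `FrobTwist.map p g` are `f` and `g` on the underlying types
  obtain ⟨y, rfl⟩ :=
    (lTensor_exact (f := FrobTwist.map p f) (g := FrobTwist.map p g) A hfg hg x).mp hgx
  have hfy : f.lTensor A (tensorFrobenius p R A M₁ y) = 0 := by
    rw [lTensor_tensorFrobenius, hx]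
  have hy : tensorFrobenius p R A M₁ y = 0 :=
    (injective_iff_map_eq_zero _).mp (Module.Flat.lTensor_preserves_injective_linearMap f hf) _ hfy
  rw [h₁ y hy, map_zero]

end TensorFrobenius

section PthRoot

variable (p : ℕ) [Fact p.Prime] {R : Type*} [CommRing R] [CharP R p]
  {M : Type*} [AddCommGroup M] [Module R M]
  {L : Type*} [CommRing L] [Algebra R L] [CharP L p] [PerfectRing L p]

noncomputable def FrobTwist.pthRoot (ι : M →ₗ[R] L) : FrobTwist p M →ₗ[R] L where
  toFun m := (frobeniusEquiv L p).symm (ι ((of p).symm m))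
  map_add' x y := by simp only [map_add]
  map_smul' r m := by
    rw [of_symm_smul, map_smul, Algebra.smul_def, map_pow, map_mul, frobeniusEquiv_symm_pow,
      RingHom.id_apply, Algebra.smul_def]

lemma FrobTwist.pthRoot_pow (ι : M →ₗ[R] L) (m : FrobTwist p M) :
    pthRoot p ι m ^ p = ι ((of p).symm m) :=
  frobenius_apply_frobeniusEquiv_symm L p _

lemma FrobTwist.pthRoot_injective {ι : M →ₗ[R] L} (hι : Function.Injective ι) :
    Function.Injective (pthRoot p ι) :=
  (frobeniusEquiv L p).symm.injective.comp (hι.comp (of p).symm.injective)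

variable {A : Type*} [CommRing A] [Algebra R A] [CharP A p]

lemma lTensor_pthRoot_pow [CharP (A ⊗[R] L) p] (ι : M →ₗ[R] L) (x : A ⊗[R] FrobTwist p M) :
    (pthRoot p ι).lTensor A x ^ p = ι.lTensor A (tensorFrobenius p R A M x) := by
  induction x with
  | zero => simp [zero_pow (Nat.Prime.ne_zero Fact.out)]
  | tmul a m =>
    rw [LinearMap.lTensor_tmul, Algebra.TensorProduct.tmul_pow, pthRoot_pow,
      tensorFrobenius_tmul, LinearMap.lTensor_tmul]
  | add x y hx hy => rw [map_add, add_pow_char, hx, hy, map_add, map_add]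

theorem tensorFrobenius_injective_of_injective [Module.Flat R A] [IsReduced (A ⊗[R] L)]
    {ι : M →ₗ[R] L} (hι : Function.Injective ι) :
    Function.Injective (tensorFrobenius p R A M) := by
  rw [injective_iff_map_eq_zero]
  intro x hx
  apply (injective_iff_map_eq_zero _).mp
    (Module.Flat.lTensor_preserves_injective_linearMap (M := A) _ (pthRoot_injective p hι))
  rcases subsingleton_or_nontrivial (A ⊗[R] L) with _ | _
  · exact Subsingleton.elim _ _
  have : CharP (A ⊗[R] L) p := (CharP.charP_iff_prime_eq_zero Fact.out).mpr <| by
    rw [← map_natCast (algebraMap A (A ⊗[R] L)), CharP.cast_eq_zero, map_zero]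
  exact IsNilpotent.eq_zero ⟨p, by rw [lTensor_pthRoot_pow, hx, map_zero]⟩

end PthRoot

theorem tensorFrobenius_injective_of_finite {p : ℕ} [Fact p.Prime] {R A : Type u} [CommRing R]
    [CharP R p] [IsNoetherianRing R] [CommRing A] [Algebra R A] [CharP A p] [Module.Flat R A]
    (hred : ∀ (L : Type u) [Field L] [Algebra R L], IsReduced (A ⊗[R] L))
    (M : Type*) [AddCommGroup M] [Module R M] [Module.Finite R M] :
    Function.Injective (tensorFrobenius p R A M) := by
  induction ‹Module.Finite R M› using
    IsNoetherianRing.induction_on_isQuotientEquivQuotientPrime R with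
  | subsingleton N =>
    have : Subsingleton (FrobTwist p N) := ‹Subsingleton N›
    exact Function.injective_of_subsingleton _
  | quotient N q e =>
    have : CharP (R ⧸ q.1) p := (CharP.charP_iff_prime_eq_zero Fact.out).mpr <| by
      rw [← map_natCast (Ideal.Quotient.mk q.1), CharP.cast_eq_zero, map_zero]
    let L := AlgebraicClosure (FractionRing (R ⧸ q.1))
    have hL : Function.Injective (algebraMap (R ⧸ q.1) L) := by
      rw [IsScalarTower.algebraMap_eq (R ⧸ q.1) (FractionRing (R ⧸ q.1)) L]
      exact (algebraMap (FractionRing (R ⧸ q.1)) L).injective.comp (IsFractionRing.injective _ _)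
    have := hred L
    exact tensorFrobenius_injective_of_injective p
      (ι := (IsScalarTower.toAlgHom R (R ⧸ q.1) L).toLinearMap ∘ₗ e.toLinearMap)
      (hL.comp e.injective)
  | exact N₁ N₂ N₃ f g hf hg hfg h₁ h₃ =>
    exact tensorFrobenius_injective_of_exact p hf hg hfg h₁ h₃

section RelFrobenius

variable (p : ℕ) [Fact p.Prime] (R : Type u) [CommRing R] [CharP R p]

def twOneEquivFrobTwist : Tw p 1 R ≃ₗ[R] FrobTwist p R where
  toFun v := of p ((twCast p 1 R).symm v)
  invFun m := twCast p 1 R ((of p).symm m)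
  map_add' v w := by simp only [map_add]
  map_smul' r v := by
    rw [tw_smul_def, map_mul, RingEquiv.symm_apply_apply, pow_one, smul_of, smul_eq_mul,
      RingHom.id_apply]
  left_inv v := rfl
  right_inv m := rfl

variable (A : Type u) [CommRing A] [Algebra R A] [CharP A p]

lemma coe_relFrobenius_eq_comp :
    ⇑(relFrobenius p R A) = TensorProduct.rid R A ∘ tensorFrobenius p R A R ∘
      (twOneEquivFrobTwist p R).lTensor A := by
  ext x
  induction x with
  | zero => simp
  | tmul a v =>
    rw [relFrobenius_tmul, Function.comp_apply, Function.comp_apply, LinearEquiv.lTensor_tmul,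
      tensorFrobenius_tmul, rid_tmul, Algebra.smul_def]
    rfl
  | add x y hx hy => simp only [map_add, hx, hy, Function.comp_apply]

end RelFrobenius

theorem relFrobenius_injective_of_flat_of_geometricallyReducedFibres_general
    (p : ℕ) [Fact p.Prime] (R A : Type u) [CommRing R] [CommRing A] [Algebra R A]
    [CharP R p] [CharP A p] [IsNoetherianRing R]
    (hflat : Module.Flat R A)
    (hred : ∀ (L : Type u) [Field L] [Algebra R L], IsReduced (A ⊗[R] L)) :
    Function.Injective (relFrobenius p R A) := by
  rw [coe_relFrobenius_eq_comp]
  exact (TensorProduct.rid R A).injective.comp <|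
    (tensorFrobenius_injective_of_finite hred R).comp
      ((twOneEquivFrobTwist p R).lTensor A).injective

/-- **(One direction of Dumitrescu's theorem.)**
Let `R → A` be a flat morphism of noetherian commutative rings of characteristic `p`
with geometrically reduced fibres (i.e. `A ⊗_R L` is reduced for every field `L`
over `R`; every such `L` is an extension of a residue field `κ(𝔭)` of `R`).
Then the relative Frobenius `Frob_{A/R} : A ⊗_{R, Frob} R → A`, `a ⊗ r ↦ a^p · r`,
is injective. -/
theorem relFrobenius_injective_of_flat_of_geometricallyReducedFibres
    (p : ℕ) [Fact p.Prime] (R A : Type u) [CommRing R] [CommRing A] [Algebra R A]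
    [CharP R p] [CharP A p] [IsNoetherianRing R] [IsNoetherianRing A]
    (hflat : Module.Flat R A)
    (hred : ∀ (L : Type u) [Field L] [Algebra R L], IsReduced (A ⊗[R] L)) :
    Function.Injective (relFrobenius p R A) :=
  relFrobenius_injective_of_flat_of_geometricallyReducedFibres_general p R A hflat hred
end

section
/- Let R be an F_p-algebra and A an R-algebra, and let M be a projective R-module. Then the natural map (lim_i A^{p^i/R}) ⊗_R M → lim_i (A^{p^i/R} ⊗_R M) is injective. -/
open TensorProduct

set_option maxHeartbeats 1000000
set_option synthInstance.maxHeartbeats 400000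

universe u

variable (p i : ℕ) (R : Type u)

variable (A : Type u)

/-!
Write `Φ_M : (Π i, N i) ⊗ M → Π i, (N i ⊗ M)` for the comparison map. For `M = κ →₀ S` both
sides are coordinatewise, `κ →₀ Π i, N i` and `Π i, κ →₀ N i`, so `Φ_M` is injective. A projective
module is a retract of a free one, and `Φ` is natural in `M`, so injectivity passes to it. The base
change map of the theorem is `Φ_M` after `(lim_i A^{p^i/R}) ⊗ M → (Π i, A^{p^i/R}) ⊗ M`, which is
injective because `M` is flat.
-/

namespace TensorProduct

variable (S : Type*) [CommSemiring S] {ι : Type*} (N : ι → Type*) [∀ i, AddCommMonoid (N i)]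
  [∀ i, Module S (N i)]

noncomputable def piLeftHom (M : Type*) [AddCommMonoid M] [Module S M] :
    (∀ i, N i) ⊗[S] M →ₗ[S] ∀ i, N i ⊗[S] M :=
  LinearMap.pi fun i => (LinearMap.proj i).rTensor M

variable {S N}

theorem piMap_lTensor_comp_piLeftHom {M F : Type*} [AddCommMonoid M] [Module S M]
    [AddCommMonoid F] [Module S F] (f : M →ₗ[S] F) :
    LinearMap.piMap (fun i => f.lTensor (N i)) ∘ₗ piLeftHom S N M =
      piLeftHom S N F ∘ₗ f.lTensor (∀ i, N i) :=
  TensorProduct.ext' fun _ _ => rfl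

theorem piLeftHom_injective_of_retract {M F : Type*} [AddCommMonoid M] [Module S M]
    [AddCommMonoid F] [Module S F] (s : M →ₗ[S] F) (r : F →ₗ[S] M) (hrs : r ∘ₗ s = .id)
    (hF : Function.Injective (piLeftHom S N F)) : Function.Injective (piLeftHom S N M) := by
  have hs : Function.LeftInverse (r.lTensor (∀ i, N i)) (s.lTensor (∀ i, N i)) := fun z => by
    rw [← LinearMap.comp_apply, ← LinearMap.lTensor_comp, hrs, LinearMap.lTensor_id,
      LinearMap.id_apply]
  refine Function.Injective.of_comp (f := LinearMap.piMap fun i => s.lTensor (N i)) ?_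
  rw [← LinearMap.coe_comp, piMap_lTensor_comp_piLeftHom]
  exact hF.comp hs.injective

theorem finsuppScalarRight_piLeftHom_apply {κ : Type*} [DecidableEq κ]
    (z : (∀ i, N i) ⊗[S] (κ →₀ S)) (i : ι) (k : κ) :
    finsuppScalarRight S S (N i) κ (piLeftHom S N (κ →₀ S) z i) k =
      finsuppScalarRight S S (∀ i, N i) κ z k i := by
  induction z using TensorProduct.induction_on with
  | zero => simp
  | tmul x f => simp [piLeftHom]
  | add z w hz hw => simp only [map_add, Pi.add_apply, Finsupp.add_apply, hz, hw]

theorem piLeftHom_injective_of_finsupp (κ : Type*) :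
    Function.Injective (piLeftHom S N (κ →₀ S)) := by
  classical
  intro z w h
  apply (finsuppScalarRight S S (∀ i, N i) κ).injective
  ext k i
  rw [← finsuppScalarRight_piLeftHom_apply, ← finsuppScalarRight_piLeftHom_apply, h]

theorem piLeftHom_injective_of_projective (M : Type*) [AddCommMonoid M] [Module S M]
    [Module.Projective S M] : Function.Injective (piLeftHom S N M) := by
  obtain ⟨s, hs⟩ := Module.projective_def'.mp ‹Module.Projective S M›
  exact piLeftHom_injective_of_retract s _ hs (piLeftHom_injective_of_finsupp M)

end TensorProduct

/-- **Injectivity of base change of preperfection along a projective module.**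
For an `F_p`-algebra `R`, an `R`-algebra `A` and a projective `R`-module `M`,
the natural map `(lim_i A^{p^i/R}) ⊗_R M → lim_i (A^{p^i/R} ⊗_R M)` is injective. -/
theorem basechange_injective_of_projective
    (p : ℕ) [Fact p.Prime] (R A M : Type u) [CommRing R] [CommRing A] [Algebra R A]
    [CharP R p] [CharP A p] [AddCommGroup M] [Module R M] [Module.Projective R M] :
    Function.Injective (basechange p R A M) := by
  have hfactor : basechange p R A M = TensorProduct.piLeftHom R (fun i => FTw p i R A) M ∘ₗ
      (prePerfection p R A).val.toLinearMap.rTensor M :=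
    TensorProduct.ext' fun _ _ => rfl
  rw [hfactor]
  exact (TensorProduct.piLeftHom_injective_of_projective M).comp
    (Module.Flat.rTensor_preserves_injective_linearMap _ Subtype.val_injective)
end

section
/- Let R be an F_p-algebra such that its absolute Frobenius Frob : R → R makes R a finite locally free module over itself. Then for any R-algebra A, the preperfection A^{p^∞/R} = lim_i A^{p^i/R} is a perfect R-algebra, i.e., its relative Frobenius over R is an isomorphism. -/
open TensorProduct

set_option maxHeartbeats 1000000
set_option synthInstance.maxHeartbeats 400000

universe u

variable (p i : ℕ) (R : Type u)

variable (A : Type u)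

/-!
Write `B` for the preperfection. The `(i+1)`-st component of the relative Frobenius of `B`
is the base change `B ⊗_{R,Frob} R → A^{p^i/R} ⊗_{R,Frob} R` followed by the isomorphism
`A^{p^i/R} ⊗_{R,Frob} R ≅ A^{p^{i+1}/R}`, `(a ⊗ x) ⊗ y ↦ a ⊗ x^p y`, and these isomorphisms
commute with the transition maps. So the relative Frobenius of `B` is the base change map
`B ⊗_{R,Frob} R → lim_i (A^{p^i/R} ⊗_{R,Frob} R)` followed by an isomorphism of inverse
limits (with an index shift). The base change map is bijective because `R` is a finite
projective module over itself via `Frob`: a finite family `x_k, f_k` with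
`m = ∑ f_k(m) x_k` writes every compatible family `y` as the image of
`∑_k (f_k-contraction of y) ⊗ x_k`.
-/

namespace TensorProduct

variable {R M N : Type*} [CommRing R] [AddCommGroup M] [Module R M]
  [AddCommGroup N] [Module R N]

noncomputable def contractWith (f : M →ₗ[R] R) : N ⊗[R] M →ₗ[R] N :=
  (TensorProduct.rid R N).toLinearMap ∘ₗ f.lTensor N

lemma contractWith_tmul (f : M →ₗ[R] R) (n : N) (m : M) :
    contractWith f (n ⊗ₜ[R] m) = f m • n := rfl

lemma contractWith_rTensor {N' : Type*} [AddCommGroup N'] [Module R N'] (f : M →ₗ[R] R)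
    (φ : N →ₗ[R] N') (z : N ⊗[R] M) : contractWith f (φ.rTensor M z) = φ (contractWith f z) := by
  induction z using TensorProduct.induction_on with
  | zero => simp
  | tmul n m => rw [LinearMap.rTensor_tmul, contractWith_tmul, contractWith_tmul, map_smul]
  | add z w hz hw => simp only [map_add, hz, hw]

lemma sum_contractWith_tmul {n : ℕ} {x : Fin n → M} {f : Fin n → M →ₗ[R] R}
    (hxf : ∀ m, ∑ k, f k m • x k = m) (z : N ⊗[R] M) :
    ∑ k, contractWith (f k) z ⊗ₜ[R] x k = z := by
  induction z using TensorProduct.induction_on with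
  | zero => simp
  | tmul n m =>
    simp_rw [contractWith_tmul, smul_tmul, ← tmul_sum, hxf]
  | add z w hz hw => simp only [map_add, add_tmul, Finset.sum_add_distrib, hz, hw]

end TensorProduct

lemma Module.Finite.exists_sum_smul_eq_of_projective (R M : Type*) [CommRing R]
    [AddCommGroup M] [Module R M] [Module.Finite R M] [Module.Projective R M] :
    ∃ (n : ℕ) (x : Fin n → M) (f : Fin n → M →ₗ[R] R), ∀ m, ∑ k, f k m • x k = m := by
  classical
  obtain ⟨n, π, s, -, -, hπs⟩ := Module.Finite.exists_comp_eq_id_of_projective R M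
  refine ⟨n, fun k => π (Pi.single k 1), fun k => LinearMap.proj k ∘ₗ s, fun m => ?_⟩
  conv_rhs => rw [← LinearMap.id_apply (R := R) m, ← hπs, LinearMap.comp_apply,
    ← Finset.univ_sum_single (s m)]
  simp only [map_sum, LinearMap.comp_apply, LinearMap.proj_apply]
  refine Finset.sum_congr rfl fun k _ => ?_
  rw [← map_smul]
  congr 1
  ext j
  by_cases h : j = k <;> simp [h]

namespace TensorProduct

variable {R M L ι : Type*} {N : ι → Type*} [CommRing R] [AddCommGroup M] [Module R M]
  [Module.Finite R M] [Module.Projective R M] [AddCommGroup L] [Module R L]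
  [∀ i, AddCommGroup (N i)] [∀ i, Module R (N i)]

lemma eq_zero_of_rTensor_proj_comp_eq_zero {j : L →ₗ[R] ∀ i, N i} (hj : Function.Injective j)
    {t : L ⊗[R] M} (ht : ∀ i, (LinearMap.proj i ∘ₗ j).rTensor M t = 0) : t = 0 := by
  obtain ⟨n, x, f, hxf⟩ := Module.Finite.exists_sum_smul_eq_of_projective R M
  have hc : ∀ k, contractWith (f k) t = 0 := fun k => hj <| funext fun i => by
    simpa [ht i] using (contractWith_rTensor (f k) (LinearMap.proj i ∘ₗ j) t).symm
  rw [← sum_contractWith_tmul hxf t]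
  simp [hc]

lemma exists_rTensor_proj_comp_eq (j : L →ₗ[R] ∀ i, N i) {y : ∀ i, N i ⊗[R] M}
    (hy : ∀ f : M →ₗ[R] R, (fun i => contractWith f (y i)) ∈ LinearMap.range j) :
    ∃ t : L ⊗[R] M, ∀ i, (LinearMap.proj i ∘ₗ j).rTensor M t = y i := by
  obtain ⟨n, x, f, hxf⟩ := Module.Finite.exists_sum_smul_eq_of_projective R M
  choose l hl using hy
  refine ⟨∑ k, l (f k) ⊗ₜ[R] x k, fun i => ?_⟩
  simp only [map_sum, LinearMap.rTensor_tmul, LinearMap.comp_apply, hl, LinearMap.proj_apply]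
  exact sum_contractWith_tmul hxf (y i)

end TensorProduct

lemma add_pow_eq_of_natCast_eq_zero {S : Type*} [CommRing S] {p : ℕ} (hp : p.Prime)
    (h : (p : S) = 0) (a b : S) : (a + b) ^ p = a ^ p + b ^ p := by
  rw [add_pow_prime_eq hp, h, zero_mul, zero_mul, zero_mul, add_zero]

section FrobeniusTwist

variable [CommRing R] [CommRing A] [Algebra R A] [Fact p.Prime] [CharP R p]

noncomputable def twFrobenius : Tw p i R →ₐ[R] Tw p (i + 1) R where
  toRingHom := (twCast p (i + 1) R).toRingHom.comp
    ((frobenius R p).comp (twCast p i R).symm.toRingHom)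
  commutes' r := by
    change twCast p (i + 1) R ((r ^ p ^ i) ^ p) = twCast p (i + 1) R (r ^ p ^ (i + 1))
    rw [← pow_mul, ← pow_succ]

namespace FTw

noncomputable def ofLeft : A →+* FTw p i R A :=
  Algebra.TensorProduct.includeLeftRingHom

lemma ofLeft_mul_algebraMap (a : A) (r : R) :
    ofLeft p i R A a * algebraMap R (FTw p i R A) r = a ⊗ₜ[R] twCast p i R r := by
  change a ⊗ₜ[R] (1 : Tw p i R) * (1 : A) ⊗ₜ[R] twCast p i R r = _
  rw [Algebra.TensorProduct.tmul_mul_tmul, mul_one, one_mul]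

lemma ofLeft_algebraMap (r : R) :
    ofLeft p i R A (algebraMap R A r) = algebraMap R (FTw p i R A) (r ^ p ^ i) := by
  change algebraMap R A r ⊗ₜ[R] (1 : Tw p i R) = _
  rw [Algebra.algebraMap_eq_smul_one, TensorProduct.smul_tmul, tw_smul_def, mul_one]
  rfl

@[elab_as_elim]
lemma induction_on {motive : FTw p i R A → Prop} (z : FTw p i R A) (zero : motive 0)
    (ofLeft_mul : ∀ a r, motive (ofLeft p i R A a * algebraMap R (FTw p i R A) r))
    (add : ∀ z w, motive z → motive w → motive (z + w)) : motive z := by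
  induction z using TensorProduct.induction_on with
  | zero => exact zero
  | tmul a x =>
    simpa only [ofLeft_mul_algebraMap, RingEquiv.apply_symm_apply] using
      ofLeft_mul a ((twCast p i R).symm x)
  | add z w hz hw => exact add z w hz hw

variable {p i R A} in
lemma ringHom_ext {S : Type*} [Semiring S] {f g : FTw p i R A →+* S}
    (h₁ : ∀ a, f (ofLeft p i R A a) = g (ofLeft p i R A a))
    (h₂ : ∀ r, f (algebraMap R (FTw p i R A) r) = g (algebraMap R (FTw p i R A) r)) : f = g :=
  Algebra.TensorProduct.ringHom_ext (RingHom.ext h₁) (RingHom.ext h₂)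

variable [CharP A p]

lemma natCast_eq_zero : (p : FTw p i R A) = 0 := by
  rw [← map_natCast (ofLeft p i R A), CharP.cast_eq_zero, map_zero]

noncomputable def frobenius : FTw p i R A →+* FTw p i R A where
  toFun z := z ^ p
  map_one' := one_pow p
  map_mul' x y := mul_pow x y p
  map_zero' := zero_pow (Fact.out : p.Prime).ne_zero
  map_add' := add_pow_eq_of_natCast_eq_zero Fact.out (natCast_eq_zero p i R A)

end FTw

noncomputable def frobeniusRight : FTw p i R A →+* FTw p (i + 1) R A :=
  (Algebra.TensorProduct.map (AlgHom.id R A) (twFrobenius p i R)).toRingHom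

lemma frobeniusRight_ofLeft (a : A) :
    frobeniusRight p i R A (FTw.ofLeft p i R A a) = FTw.ofLeft p (i + 1) R A a := by
  change a ⊗ₜ[R] twFrobenius p i R 1 = _
  rw [map_one]
  rfl

lemma frobeniusRight_algebraMap (r : R) :
    frobeniusRight p i R A (algebraMap R (FTw p i R A) r) =
      algebraMap R (FTw p (i + 1) R A) (r ^ p) := rfl

variable [CharP A p]

lemma transAlgHom_ofLeft (a : A) :
    transAlgHom p i R A (FTw.ofLeft p (i + 1) R A a) = FTw.ofLeft p i R A (a ^ p) := by
  rw [transAlgHom_apply]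
  exact transAddHom_tmul p i R A a 1

lemma frobeniusRight_transAlgHom (z : FTw p (i + 1) R A) :
    frobeniusRight p i R A (transAlgHom p i R A z) = z ^ p := by
  have h : (frobeniusRight p i R A).comp (transAlgHom p i R A : FTw p (i + 1) R A →+* _) =
      FTw.frobenius p (i + 1) R A := by
    refine FTw.ringHom_ext (fun a => ?_) (fun r => ?_)
    · simp [-transAlgHom_apply, transAlgHom_ofLeft, frobeniusRight_ofLeft, FTw.frobenius]
    · simp [-transAlgHom_apply, frobeniusRight_algebraMap, FTw.frobenius]
  exact DFunLike.congr_fun h z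

lemma transAlgHom_frobeniusRight (z : FTw p (i + 1) R A) :
    transAlgHom p (i + 1) R A (frobeniusRight p (i + 1) R A z) = z ^ p := by
  have h : (transAlgHom p (i + 1) R A : FTw p (i + 2) R A →+* _).comp
      (frobeniusRight p (i + 1) R A) = FTw.frobenius p (i + 1) R A := by
    refine FTw.ringHom_ext (fun a => ?_) (fun r => ?_)
    · simp [-transAlgHom_apply, transAlgHom_ofLeft, frobeniusRight_ofLeft, FTw.frobenius]
    · simp [-transAlgHom_apply, frobeniusRight_algebraMap, FTw.frobenius]
  exact DFunLike.congr_fun h z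

end FrobeniusTwist

section Twist

variable [CommRing R] [CommRing A] [Algebra R A] [Fact p.Prime] [CharP R p]

noncomputable def twistAddHom : FTw p i R A ⊗[R] Tw p 1 R →+ FTw p (i + 1) R A :=
  TensorProduct.liftAddHom
    (AddMonoidHom.mk' (fun z => AddMonoidHom.mk'
        (fun v => frobeniusRight p i R A z *
          algebraMap R (FTw p (i + 1) R A) ((twCast p 1 R).symm v))
        fun v w => by simp [mul_add])
      fun z w => by ext v; simp [add_mul])
    fun r z v => by
      simp only [AddMonoidHom.mk'_apply]
      rw [Algebra.smul_def, map_mul, frobeniusRight_algebraMap, tw_smul_def, map_mul,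
        RingEquiv.symm_apply_apply, map_mul, pow_one]
      ring

lemma twistAddHom_tmul (z : FTw p i R A) (v : Tw p 1 R) :
    twistAddHom p i R A (z ⊗ₜ[R] v) =
      frobeniusRight p i R A z * algebraMap R (FTw p (i + 1) R A) ((twCast p 1 R).symm v) :=
  TensorProduct.liftAddHom_tmul _ _ _ _

noncomputable def untwistAddHom : FTw p (i + 1) R A →+ FTw p i R A ⊗[R] Tw p 1 R :=
  TensorProduct.liftAddHom
    (AddMonoidHom.mk' (fun a => AddMonoidHom.mk'
        (fun s => FTw.ofLeft p i R A a ⊗ₜ[R] twCast p 1 R ((twCast p (i + 1) R).symm s))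
        fun s t => by simp [TensorProduct.tmul_add])
      fun a b => by ext s; simp [TensorProduct.add_tmul])
    fun r a s => by
      simp only [AddMonoidHom.mk'_apply]
      rw [Algebra.smul_def, map_mul, FTw.ofLeft_algebraMap, ← Algebra.smul_def,
        TensorProduct.smul_tmul, tw_smul_def, tw_smul_def, map_mul, map_mul,
        RingEquiv.symm_apply_apply, pow_one, ← pow_mul, ← pow_succ]

lemma untwistAddHom_ofLeft_mul_algebraMap (a : A) (r : R) :
    untwistAddHom p i R A (FTw.ofLeft p (i + 1) R A a * algebraMap R _ r) =
      FTw.ofLeft p i R A a ⊗ₜ[R] twCast p 1 R r := by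
  rw [FTw.ofLeft_mul_algebraMap]
  exact TensorProduct.liftAddHom_tmul _ _ _ _

lemma twistAddHom_untwistAddHom (z : FTw p (i + 1) R A) :
    twistAddHom p i R A (untwistAddHom p i R A z) = z := by
  induction z using FTw.induction_on with
  | zero => simp
  | ofLeft_mul a r =>
    rw [untwistAddHom_ofLeft_mul_algebraMap, twistAddHom_tmul, frobeniusRight_ofLeft]
    rfl
  | add z w hz hw => rw [map_add, map_add, hz, hw]

lemma untwistAddHom_twistAddHom (w : FTw p i R A ⊗[R] Tw p 1 R) :
    untwistAddHom p i R A (twistAddHom p i R A w) = w := by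
  induction w using TensorProduct.induction_on with
  | zero => simp
  | tmul z v =>
    induction z using FTw.induction_on with
    | zero => simp
    | ofLeft_mul a r =>
      rw [twistAddHom_tmul, map_mul (frobeniusRight p i R A), frobeniusRight_ofLeft,
        frobeniusRight_algebraMap, mul_assoc, ← map_mul (algebraMap R _),
        untwistAddHom_ofLeft_mul_algebraMap, mul_comm (FTw.ofLeft p i R A a), ← Algebra.smul_def,
        TensorProduct.smul_tmul, tw_smul_def, pow_one, map_mul]
      rfl
    | add z₁ z₂ h₁ h₂ => rw [TensorProduct.add_tmul, map_add, map_add, h₁, h₂]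
  | add w₁ w₂ h₁ h₂ => rw [map_add, map_add, h₁, h₂]

noncomputable def twistEquiv : FTw p i R A ⊗[R] Tw p 1 R ≃+ FTw p (i + 1) R A where
  toFun := twistAddHom p i R A
  invFun := untwistAddHom p i R A
  left_inv := untwistAddHom_twistAddHom p i R A
  right_inv := twistAddHom_untwistAddHom p i R A
  map_add' := map_add _

lemma twistEquiv_tmul (z : FTw p i R A) (v : Tw p 1 R) :
    twistEquiv p i R A (z ⊗ₜ[R] v) =
      frobeniusRight p i R A z * algebraMap R (FTw p (i + 1) R A) ((twCast p 1 R).symm v) :=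
  twistAddHom_tmul p i R A z v

lemma twistEquiv_rTensor_transAlgHom [CharP A p] (w : FTw p (i + 1) R A ⊗[R] Tw p 1 R) :
    twistEquiv p i R A ((transAlgHom p i R A).toLinearMap.rTensor (Tw p 1 R) w) =
      transAlgHom p (i + 1) R A (twistEquiv p (i + 1) R A w) := by
  induction w using TensorProduct.induction_on with
  | zero => simp only [map_zero]
  | tmul z v =>
    rw [LinearMap.rTensor_tmul, AlgHom.toLinearMap_apply, twistEquiv_tmul, twistEquiv_tmul,
      map_mul, AlgHom.commutes, frobeniusRight_transAlgHom, transAlgHom_frobeniusRight]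
  | add w₁ w₂ h₁ h₂ => simp only [map_add, h₁, h₂]

end Twist

section PrePerfection

variable [CommRing R] [CommRing A] [Algebra R A] [Fact p.Prime] [CharP R p] [CharP A p]

lemma prePerfection_ext_succ {x y : prePerfection p R A}
    (h : ∀ i, (x : ∀ j, FTw p j R A) (i + 1) = (y : ∀ j, FTw p j R A) (i + 1)) : x = y := by
  refine Subtype.ext (funext fun j => ?_)
  cases j with
  | zero => rw [← x.2 0, ← y.2 0, h 0]
  | succ i => exact h i

variable (M : Type u) [AddCommGroup M] [Module R M]

lemma basechange_tmul (b : prePerfection p R A) (m : M) (i : ℕ) :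
    basechange p R A M (b ⊗ₜ[R] m) i = (b : ∀ j, FTw p j R A) i ⊗ₜ[R] m := rfl

lemma contractWith_mem_prePerfection {y : ∀ i, FTw p i R A ⊗[R] M}
    (hy : y ∈ limTensor p R A M) (f : M →ₗ[R] R) :
    (fun i => TensorProduct.contractWith f (y i)) ∈ prePerfection p R A := fun i => by
  change transAlgHom p i R A (TensorProduct.contractWith f (y (i + 1))) =
    TensorProduct.contractWith f (y i)
  rw [← hy i, TensorProduct.contractWith_rTensor]
  rfl

lemma basechange_injective [Module.Finite R M] [Module.Projective R M] :
    Function.Injective (basechange p R A M) :=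
  (injective_iff_map_eq_zero _).2 fun _ ht =>
    TensorProduct.eq_zero_of_rTensor_proj_comp_eq_zero
      (j := (prePerfection p R A).val.toLinearMap) Subtype.val_injective fun i => congr_fun ht i

lemma range_basechange [Module.Finite R M] [Module.Projective R M] :
    LinearMap.range (basechange p R A M) = limTensor p R A M := by
  refine le_antisymm ?_ fun y hy => ?_
  · rintro _ ⟨t, rfl⟩
    induction t using TensorProduct.induction_on with
    | zero => rw [map_zero]; exact zero_mem _
    | tmul b m =>
      intro i
      rw [basechange_tmul, basechange_tmul, LinearMap.rTensor_tmul, AlgHom.toLinearMap_apply,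
        b.2 i]
    | add t₁ t₂ h₁ h₂ => rw [map_add]; exact add_mem h₁ h₂
  · obtain ⟨t, ht⟩ := TensorProduct.exists_rTensor_proj_comp_eq
      (prePerfection p R A).val.toLinearMap
      fun f => ⟨⟨_, contractWith_mem_prePerfection p R A M hy f⟩, rfl⟩
    exact ⟨t, funext ht⟩

lemma twistEquiv_symm_mem_limTensor (b : prePerfection p R A) :
    (fun i => (twistEquiv p i R A).symm ((b : ∀ j, FTw p j R A) (i + 1))) ∈
      limTensor p R A (Tw p 1 R) := fun i => by
  apply (twistEquiv p i R A).injective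
  rw [twistEquiv_rTensor_transAlgHom, AddEquiv.apply_symm_apply, AddEquiv.apply_symm_apply]
  exact b.2 (i + 1)

lemma relFrobenius_prePerfection_apply_succ [CharP (prePerfection p R A) p]
    (t : prePerfection p R A ⊗[R] Tw p 1 R) (i : ℕ) :
    (relFrobenius p R (prePerfection p R A) t : ∀ j, FTw p j R A) (i + 1) =
      twistEquiv p i R A (basechange p R A (Tw p 1 R) t i) := by
  induction t using TensorProduct.induction_on with
  | zero => simp only [map_zero]; rfl
  | tmul b v =>
    rw [relFrobenius_tmul, basechange_tmul, ← b.2 i, twistEquiv_tmul, frobeniusRight_transAlgHom,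
      mul_comm]
    rfl
  | add t₁ t₂ h₁ h₂ => simp only [map_add, Subalgebra.coe_add, Pi.add_apply, h₁, h₂]

end PrePerfection

/-- **Preperfection is perfect when Frobenius is finite locally free.**
Let `R` be an `F_p`-algebra whose absolute Frobenius makes `R` a finite locally
free (= finite projective) module over itself (the Frobenius module structure is
encoded by `Tw p 1 R`).  Then for any `R`-algebra `A`, the preperfection
`A^{p^∞/R} = lim_i A^{p^i/R}` is a perfect `R`-algebra: its relative Frobenius
`B ⊗_{R, Frob} R → B`, `b ⊗ r ↦ b^p · r`, is an isomorphism. -/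
theorem prePerfection_isRelativelyPerfect_of_frobenius_finite_locally_free
    (p : ℕ) [Fact p.Prime] (R A : Type u) [CommRing R] [CommRing A] [Algebra R A]
    [CharP R p] [CharP A p]
    [Module.Finite R (Tw p 1 R)] [Module.Projective R (Tw p 1 R)]
    [CharP (↥(prePerfection p R A)) p] :
    Function.Bijective (relFrobenius p R (↥(prePerfection p R A))) := by
  refine ⟨(injective_iff_map_eq_zero _).2 fun t ht => ?_, fun b => ?_⟩
  · refine (injective_iff_map_eq_zero _).1 (basechange_injective p R A (Tw p 1 R)) t
      (funext fun i => (twistEquiv p i R A).injective ?_)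
    rw [← relFrobenius_prePerfection_apply_succ, ht, Pi.zero_apply, map_zero]
    rfl
  · obtain ⟨t, ht⟩ := (range_basechange p R A (Tw p 1 R)).ge
      (twistEquiv_symm_mem_limTensor p R A b)
    refine ⟨t, prePerfection_ext_succ p R A fun i => ?_⟩
    rw [relFrobenius_prePerfection_apply_succ, ht, AddEquiv.apply_symm_apply]
end

section
/- Let k be an algebraically closed field of characteristic p and A a finitely generated reduced k-algebra with connected spectrum. Then every element x of A that is an infinitely divisible p-th power (i.e., for every n ≥ 0 there exists x_n ∈ A with x = x_n^{p^n}) lies in k. Equivalently, the intersection ⋂_{n≥0} A^{p^n} of the images of the iterated Frobenius equals k. -/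
/-!
Subtracting from `x` a constant `l` with `x ≡ l` modulo some maximal ideal (Nullstellensatz)
gives an infinitely `p`-divisible non-unit `u`, since constants have all `p ^ n`-th roots and
Frobenius is additive. Such a `u` lies in every power of `I = √(u)`, so Krull's intersection
theorem gives `r ∈ I` with `r * u = u`; a power of `r` is a multiple `c * u`, whence `u = c * u * u`.
Then `c * u` is idempotent, so it is `0` or `1`, and as `u` is not a unit, `u = 0`.
-/

theorem Ideal.exists_mem_mul_eq_self_of_forall_mem_pow {R : Type*} [CommRing R]
    [IsNoetherianRing R] (I : Ideal R) {x : R} (hx : ∀ i : ℕ, x ∈ I ^ i) :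
    ∃ r ∈ I, r * x = x := by
  have hx' : x ∈ (⨅ i : ℕ, I ^ i • ⊤ : Submodule R R) := by
    simpa only [smul_eq_mul, Ideal.mul_top, Submodule.mem_iInf] using hx
  obtain ⟨⟨r, hr⟩, hrx⟩ := (I.mem_iInf_smul_pow_eq_bot_iff x).mp hx'
  exact ⟨r, hr, hrx⟩

section InfinitelyDivisible

variable {R : Type*} [CommRing R] {p : ℕ}

theorem mem_radical_span_singleton_pow_of_forall_exists_pow_pow_eq (hp : 1 < p) {u : R}
    (hu : ∀ n : ℕ, ∃ z : R, z ^ p ^ n = u) (i : ℕ) : u ∈ (Ideal.span {u}).radical ^ i := by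
  obtain ⟨z, rfl⟩ := hu i
  have hz : z ∈ (Ideal.span {z ^ p ^ i}).radical := ⟨p ^ i, Ideal.mem_span_singleton_self _⟩
  exact Ideal.pow_le_pow_right (Nat.lt_pow_self hp).le (Ideal.pow_mem_pow hz _)

theorem exists_mul_mul_self_eq_of_forall_exists_pow_pow_eq [IsNoetherianRing R] (hp : 1 < p)
    {u : R} (hu : ∀ n : ℕ, ∃ z : R, z ^ p ^ n = u) : ∃ c : R, c * u * u = u := by
  obtain ⟨r, ⟨N, hrN⟩, hru⟩ := (Ideal.span {u}).radical.exists_mem_mul_eq_self_of_forall_mem_pow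
    (mem_radical_span_singleton_pow_of_forall_exists_pow_pow_eq hp hu)
  obtain ⟨c, hc⟩ := Ideal.mem_span_singleton'.mp hrN
  have hpow : ∀ n : ℕ, r ^ n * u = u := fun n => by
    induction n with
    | zero => rw [pow_zero, one_mul]
    | succ n ih => rw [pow_succ, mul_assoc, hru, ih]
  exact ⟨c, by rw [hc, hpow]⟩

theorem forall_exists_pow_pow_eq_sub [Fact p.Prime] [CharP R p] {x y : R}
    (hx : ∀ n : ℕ, ∃ a : R, a ^ p ^ n = x) (hy : ∀ n : ℕ, ∃ b : R, b ^ p ^ n = y) :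
    ∀ n : ℕ, ∃ z : R, z ^ p ^ n = x - y := by
  intro n
  obtain ⟨a, rfl⟩ := hx n
  obtain ⟨b, hb⟩ := hy n
  exact ⟨a - b, by rw [sub_pow_char_pow, hb]⟩

end InfinitelyDivisible

theorem eq_zero_or_isUnit_of_mul_mul_self_eq {R : Type*} [CommRing R]
    (hconn : ∀ e : R, IsIdempotentElem e → e = 0 ∨ e = 1) {c u : R} (h : c * u * u = u) :
    u = 0 ∨ IsUnit u := by
  have hidem : IsIdempotentElem (c * u) := by
    rw [IsIdempotentElem]
    linear_combination c * h
  rcases hconn _ hidem with h0 | h1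
  · left
    rw [← h, h0, zero_mul]
  · exact Or.inr (IsUnit.of_mul_eq_one c (by rw [mul_comm, h1]))

theorem exists_sub_algebraMap_mem_of_isMaximal (k : Type*) {A : Type*} [Field k] [IsAlgClosed k]
    [CommRing A] [Algebra k A] [Algebra.FiniteType k A] (m : Ideal A) [m.IsMaximal] (x : A) :
    ∃ l : k, x - algebraMap k A l ∈ m := by
  let : Field (A ⧸ m) := Ideal.Quotient.field m
  have : Module.Finite k (A ⧸ m) := finite_of_finite_type_of_isJacobsonRing k (A ⧸ m)
  have : Algebra.IsIntegral k (A ⧸ m) := Algebra.IsIntegral.of_finite k (A ⧸ m)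
  obtain ⟨l, hl⟩ := (IsAlgClosed.algebraMap_bijective_of_isIntegral (k := k) (K := A ⧸ m)).2
    (Ideal.Quotient.mk m x)
  refine ⟨l, Ideal.Quotient.eq.mp ?_⟩
  rw [← hl, Ideal.Quotient.mk_algebraMap]

theorem iInf_frobenius_images_eq_constants_general
    (p : ℕ) [Fact p.Prime] (k A : Type*) [Field k] [IsAlgClosed k] [CharP k p]
    [CommRing A] [Algebra k A] [Algebra.FiniteType k A]
    (hconn : ∀ e : A, e * e = e → e = 0 ∨ e = 1) :
    ∀ x : A, (∀ n : ℕ, ∃ y : A, y ^ p ^ n = x) → x ∈ (algebraMap k A).range := by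
  intro x hx
  cases subsingleton_or_nontrivial A
  · exact ⟨0, Subsingleton.elim _ _⟩
  have hp : 1 < p := (Fact.out : p.Prime).one_lt
  have : CharP A p := charP_of_injective_algebraMap' k p
  have : IsNoetherianRing A := Algebra.FiniteType.isNoetherianRing k A
  obtain ⟨m, hm⟩ := Ideal.exists_maximal A
  obtain ⟨l, hlm⟩ := exists_sub_algebraMap_mem_of_isMaximal k m x
  have hl : ∀ n : ℕ, ∃ z : A, z ^ p ^ n = algebraMap k A l := fun n => by
    obtain ⟨μ, hμ⟩ := IsAlgClosed.exists_pow_nat_eq l (pow_pos (by omega : 0 < p) n)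
    exact ⟨algebraMap k A μ, by rw [← map_pow, hμ]⟩
  obtain ⟨c, hc⟩ :=
    exists_mul_mul_self_eq_of_forall_exists_pow_pow_eq hp (forall_exists_pow_pow_eq_sub hx hl)
  rcases eq_zero_or_isUnit_of_mul_mul_self_eq hconn hc with h0 | hunit
  · exact ⟨l, (sub_eq_zero.mp h0).symm⟩
  · exact absurd (Ideal.eq_top_of_isUnit_mem m hlm hunit) hm.ne_top

/-- Let `k` be an algebraically closed field of characteristic `p` and `A` a
finitely generated reduced `k`-algebra with connected spectrum (no nontrivial
idempotents).  Then every element of `A` which is an infinitely divisible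
`p`-th power lies in (the image of) `k`; equivalently `⋂ₙ A^{pⁿ} = k`. -/
theorem iInf_frobenius_images_eq_constants
    (p : ℕ) [Fact p.Prime] (k A : Type*) [Field k] [IsAlgClosed k] [CharP k p]
    [CommRing A] [IsReduced A] [Algebra k A] [Algebra.FiniteType k A]
    (hconn : ∀ e : A, e * e = e → e = 0 ∨ e = 1) :
    ∀ x : A, (∀ n : ℕ, ∃ y : A, y ^ p ^ n = x) → x ∈ (algebraMap k A).range :=
  iInf_frobenius_images_eq_constants_general p k A hconn
end

section
/- Let A be a noetherian commutative ring with connected spectrum (no nontrivial idempotents) of characteristic p, and let x ∈ ⋂_{n≥0} A^{p^n}, say x = x_n^{p^n} for each n. Then x = 0 or x is a unit of A. -/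
/-! Roots `x = rₙ ^ pⁿ` are unique up to nilpotents, and in a noetherian ring some fixed power
`p ^ k` kills every nilpotent; so `zₙ := r_{n+k} ^ p ^ k` is a compatible system of roots,
`z_{n+1} ^ p = zₙ`. The principal ideals `(zₙ)` form an ascending chain, which stabilizes:
`y := z_{n+1}` satisfies `(y) = (y ^ p) ⊆ (y ^ 2)`, say `y = y ^ 2 c`. Then `y c` is idempotent,
so by connectedness `y = 0` or `y` is a unit, and so is `x = y ^ p ^ (n+1)`. -/

theorem IsNoetherianRing.exists_pow_eq_zero_of_isNilpotent (A : Type*) [CommSemiring A]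
    [IsNoetherianRing A] : ∃ k, ∀ a : A, IsNilpotent a → a ^ k = 0 := by
  obtain ⟨k, hk⟩ := IsNoetherianRing.isNilpotent_nilradical A
  refine ⟨k, fun a ha => ?_⟩
  have : a ^ k ∈ nilradical A ^ k := Ideal.pow_mem_pow (mem_nilradical.mpr ha) k
  rwa [hk, Ideal.zero_eq_bot, Ideal.mem_bot] at this

theorem IsNoetherianRing.exists_dvd_succ_of_succ_dvd {A : Type*} [CommSemiring A]
    [IsNoetherianRing A] (z : ℕ → A) (hz : ∀ n, z (n + 1) ∣ z n) :
    ∃ n, z n ∣ z (n + 1) := by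
  have hmono : Monotone fun n => Ideal.span {z n} :=
    monotone_nat_of_le_succ fun n => Ideal.span_singleton_le_span_singleton.mpr (hz n)
  obtain ⟨n, hn⟩ := monotone_stabilizes_iff_noetherian.mpr inferInstance ⟨_, hmono⟩
  exact ⟨n, Ideal.span_singleton_le_span_singleton.mp (hn (n + 1) n.le_succ).ge⟩

theorem isIdempotentElem_mul_of_eq_sq_mul {A : Type*} [CommSemiring A] {y c : A}
    (h : y = y ^ 2 * c) : IsIdempotentElem (y * c) := by
  calc y * c * (y * c) = y ^ 2 * c * c := by ring
    _ = y * c := by rw [← h]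

theorem eq_zero_or_isUnit_of_sq_dvd {A : Type*} [CommSemiring A]
    (hconn : ∀ e : A, e * e = e → e = 0 ∨ e = 1) {y : A} (h : y ^ 2 ∣ y) :
    y = 0 ∨ IsUnit y := by
  obtain ⟨c, hc⟩ := h
  rcases hconn _ (isIdempotentElem_mul_of_eq_sq_mul hc) with he | he
  · left
    calc y = y ^ 2 * c := hc
      _ = y * (y * c) := by ring
      _ = 0 := by rw [he, mul_zero]
  · exact Or.inr (IsUnit.of_mul_eq_one c he)

theorem exists_frobenius_compatible_roots {p : ℕ} [Fact p.Prime] {A : Type*} [CommRing A]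
    [CharP A p] [IsNoetherianRing A] {x : A} (hx : ∀ n : ℕ, ∃ y : A, y ^ p ^ n = x) :
    ∃ z : ℕ → A, ∀ n, z n ^ p ^ n = x ∧ z (n + 1) ^ p = z n := by
  choose r hr using hx
  -- Consecutive roots agree up to nilpotents, and `p ^ k`-th powers kill all nilpotents.
  obtain ⟨k, hk⟩ := IsNoetherianRing.exists_pow_eq_zero_of_isNilpotent A
  have hroots_nil : ∀ n, IsNilpotent (r n - r (n + 1) ^ p) :=
    fun n => ⟨p ^ n, by rw [sub_pow_char_pow, ← pow_mul, ← pow_succ', hr, hr, sub_self]⟩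
  refine ⟨fun n => r (n + k) ^ p ^ k, fun n => ⟨?_, ?_⟩⟩
  · rw [← pow_mul, ← pow_add, add_comm k, hr]
  · have hk' : k ≤ p ^ k := (Nat.lt_pow_self (Fact.out : p.Prime).one_lt).le
    rw [← pow_mul, pow_mul', eq_comm, ← sub_eq_zero, ← sub_pow_char_pow,
      show n + 1 + k = n + k + 1 by omega]
    exact pow_eq_zero_of_le hk' (hk _ (hroots_nil _))

/-- Let `A` be a noetherian commutative ring of characteristic `p` with
connected spectrum (no nontrivial idempotents) and let `x ∈ ⋂ₙ A^{pⁿ}` be an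
infinitely divisible `p`-th power.  Then `x = 0` or `x` is a unit of `A`. -/
theorem zero_or_unit_of_mem_iInf_frobenius_images
    (p : ℕ) [Fact p.Prime] (A : Type*) [CommRing A] [CharP A p]
    [IsNoetherianRing A]
    (hconn : ∀ e : A, e * e = e → e = 0 ∨ e = 1)
    (x : A) (hx : ∀ n : ℕ, ∃ y : A, y ^ p ^ n = x) :
    x = 0 ∨ IsUnit x := by
  obtain ⟨z, hz⟩ := exists_frobenius_compatible_roots hx
  have hp : 2 ≤ p := (Fact.out : p.Prime).two_le
  obtain ⟨n, hn⟩ := IsNoetherianRing.exists_dvd_succ_of_succ_dvd z fun n =>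
    (hz n).2 ▸ dvd_pow_self _ (by omega)
  have hsq : z (n + 1) ^ 2 ∣ z (n + 1) := (pow_dvd_pow _ hp).trans ((hz n).2 ▸ hn)
  rw [← (hz (n + 1)).1]
  rcases eq_zero_or_isUnit_of_sq_dvd hconn hsq with h | h
  · exact Or.inl (by rw [h, zero_pow (by positivity)])
  · exact Or.inr (h.pow _)
end

section
/- Let p be an odd prime, R = F_p[[u,v]]/(uv), and consider the inverse system of R-modules M_n = R ⊕ R/u^{p^n} with transition maps G_n : M_n → M_{n−1} defined by G_n(f, g) = (f, g · v^{p^n − p^{n−1}}). Then the natural map R → lim_n M_n, f ↦ (f, 0)_n, is an isomorphism of R-modules. -/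
/-- `R = F_p[[u,v]]/(uv)`. -/
noncomputable abbrev R16 (p : ℕ) : Type :=
  MvPowerSeries (Fin 2) (ZMod p) ⧸
    (Ideal.span {MvPowerSeries.X 0 * MvPowerSeries.X 1} :
      Ideal (MvPowerSeries (Fin 2) (ZMod p)))

/-- The image `u` of the first variable in `R`. -/
noncomputable abbrev u16 (p : ℕ) : R16 p :=
  Ideal.Quotient.mk _ (MvPowerSeries.X 0)

/-- The image `v` of the second variable in `R`. -/
noncomputable abbrev v16 (p : ℕ) : R16 p :=
  Ideal.Quotient.mk _ (MvPowerSeries.X 1)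

/-- The module `M n = R ⊕ R/(u^{p^n})`. -/
noncomputable abbrev M16 (p n : ℕ) : Type :=
  R16 p × (R16 p ⧸ (Ideal.span {u16 p ^ p ^ n} : Ideal (R16 p)))

/-- The transition map `G_{n+1} : M_{n+1} → M_n`, `(f, g) ↦ (f, g · v^{p^{n+1} - p^n})`. -/
noncomputable def G16 (p : ℕ) [Fact p.Prime] (n : ℕ) (x : M16 p (n + 1)) : M16 p n :=
  (x.1,
    Ideal.Quotient.factor
      (Ideal.span_singleton_le_span_singleton.mpr
        (pow_dvd_pow (u16 p)
          (Nat.pow_le_pow_right (Nat.Prime.one_lt (Fact.out : p.Prime)).le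
            (Nat.le_succ n)))) x.2
      * Ideal.Quotient.mk _ (v16 p ^ (p ^ (n + 1) - p ^ n)))

/-! The first components of a compatible family are all equal, so everything rests on the second
ones. Each transition map multiplies by a positive power of `v`, so the `n`-th second component is
divisible by every power of `v` in `R/(u^{p^n})`. This ring is Noetherian and `v` lies in its
Jacobson radical (it is a quotient of `F_p[[u,v]]`), so Krull's intersection theorem makes that
component vanish. -/

theorem Ideal.eq_zero_of_forall_pow_dvd_of_mem_jacobson_bot {S : Type*} [CommRing S]
    [IsNoetherianRing S] {y a : S} (hy : y ∈ (⊥ : Ideal S).jacobson) (h : ∀ e, y ^ e ∣ a) :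
    a = 0 := by
  have hKrull := Ideal.iInf_pow_smul_eq_bot_of_le_jacobson (M := S) (Ideal.span {y})
    (Ideal.span_singleton_le_iff_mem _ |>.mpr hy)
  rw [eq_bot_iff] at hKrull
  refine (Submodule.mem_bot S).mp (hKrull (Submodule.mem_iInf _ |>.mpr fun e => ?_))
  rw [smul_eq_mul, ← Ideal.one_eq_top, mul_one, Ideal.span_singleton_pow]
  exact Ideal.mem_span_singleton.mpr (h e)

theorem Ideal.map_mem_jacobson_bot_of_surjective {A B : Type*} [CommRing A] [CommRing B]
    {f : A →+* B} (hf : Function.Surjective f) {x : A} (hx : x ∈ (⊥ : Ideal A).jacobson) :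
    f x ∈ (⊥ : Ideal B).jacobson := by
  refine Ideal.mem_jacobson_bot.mpr fun y => ?_
  obtain ⟨y, rfl⟩ := hf y
  simpa using (Ideal.mem_jacobson_bot.mp hx y).map f

theorem MvPowerSeries.X_mem_jacobson_bot {σ k : Type*} [CommRing k] (i : σ) :
    (X i : MvPowerSeries σ k) ∈ (⊥ : Ideal _).jacobson :=
  Ideal.mem_jacobson_bot.mpr fun y => MvPowerSeries.isUnit_iff_constantCoeff.mpr (by simp)

theorem mk_v16_mem_jacobson_bot (p n : ℕ) :
    Ideal.Quotient.mk (Ideal.span {u16 p ^ p ^ n}) (v16 p) ∈ (⊥ : Ideal _).jacobson :=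
  Ideal.map_mem_jacobson_bot_of_surjective Ideal.Quotient.mk_surjective <|
    Ideal.map_mem_jacobson_bot_of_surjective Ideal.Quotient.mk_surjective <|
      MvPowerSeries.X_mem_jacobson_bot 1

theorem fst_eq_of_compatible {p : ℕ} [Fact p.Prime] {x : ∀ n, M16 p n}
    (hx : ∀ n, G16 p n (x (n + 1)) = x n) (n : ℕ) : (x n).1 = (x 0).1 := by
  induction n with
  | zero => rfl
  | succ n ih => exact (congrArg Prod.fst (hx n)).trans ih

theorem pow_v16_dvd_snd_of_compatible {p : ℕ} [Fact p.Prime] {x : ∀ n, M16 p n}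
    (hx : ∀ n, G16 p n (x (n + 1)) = x n) (k n : ℕ) :
    Ideal.Quotient.mk (Ideal.span {u16 p ^ p ^ n}) (v16 p) ^ k ∣ (x n).2 := by
  -- `M16` reaches this quotient ring through another instance path, hence the explicit `α`s.
  induction k generalizing n with
  | zero => exact one_dvd (α := R16 p ⧸ Ideal.span {u16 p ^ p ^ n}) _
  | succ k ih =>
    have hexp : 1 ≤ p ^ (n + 1) - p ^ n := by
      have := Nat.pow_lt_pow_right (Fact.out : p.Prime).one_lt n.lt_add_one
      omega
    have hstep : Ideal.Quotient.mk (Ideal.span {u16 p ^ p ^ n}) (v16 p) ∣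
        Ideal.Quotient.mk _ (v16 p ^ (p ^ (n + 1) - p ^ n)) := by
      rw [map_pow]
      exact dvd_pow_self _ (by omega)
    have hle : Ideal.span {u16 p ^ p ^ (n + 1)} ≤ Ideal.span {u16 p ^ p ^ n} :=
      Ideal.span_singleton_le_span_singleton.mpr (pow_dvd_pow _ (by omega))
    have hprev := map_dvd (Ideal.Quotient.factor hle) (ih (n + 1))
    rw [map_pow, Ideal.Quotient.factor_mk] at hprev
    rw [← hx n, pow_succ]
    exact mul_dvd_mul (α := R16 p ⧸ Ideal.span {u16 p ^ p ^ n}) hprev hstep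

theorem snd_eq_zero_of_compatible {p : ℕ} [Fact p.Prime] {x : ∀ n, M16 p n}
    (hx : ∀ n, G16 p n (x (n + 1)) = x n) (n : ℕ) : (x n).2 = 0 :=
  Ideal.eq_zero_of_forall_pow_dvd_of_mem_jacobson_bot (S := R16 p ⧸ Ideal.span {u16 p ^ p ^ n})
    (mk_v16_mem_jacobson_bot p n) (pow_v16_dvd_snd_of_compatible hx · n)

theorem limit_M16_eq_base_general (p : ℕ) [Fact p.Prime] :
    Set.BijOn (fun (f : R16 p) => (fun n => ((f, 0) : M16 p n)))
      Set.univ {x : ∀ n, M16 p n | ∀ n, G16 p n (x (n + 1)) = x n} := by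
  refine ⟨fun f _ n => by simp [G16], fun f _ g _ h => congrArg Prod.fst (congrFun h 0), ?_⟩
  intro x hx
  exact ⟨(x 0).1, trivial, funext fun n =>
    Prod.ext (fst_eq_of_compatible hx n).symm (snd_eq_zero_of_compatible hx n).symm⟩

/-- **The inverse limit of the system `M_n = R ⊕ R/(u^{p^n})` with transition
maps `(f,g) ↦ (f, g·v^{p^{n+1}-p^n})` over `R = F_p[[u,v]]/(uv)` (p odd) is `R`**:
the natural map `f ↦ (f, 0)ₙ` is a bijection of `R` onto the inverse limit
(and it is manifestly `R`-linear, hence an isomorphism of `R`-modules). -/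
theorem limit_M16_eq_base (p : ℕ) [Fact p.Prime] (hp : p ≠ 2) :
    Set.BijOn (fun (f : R16 p) => (fun n => ((f, 0) : M16 p n)))
      Set.univ {x : ∀ n, M16 p n | ∀ n, G16 p n (x (n + 1)) = x n} :=
  limit_M16_eq_base_general p
end
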